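/- arXiv:1503.08579 — 2 statements merged into one kernel-verified Lean document; each statement's English description precedes it below -/
import Mathlib

section
/- The polycyclic Pauli root group P = ⟨V_{k,3}, ρ_{12}⟩ is finite of order 2k², and is isomorphic to the wreath product C_k ≀ C_2 (i.e., (C_k × C_k) ⋊ C_2 with C_2 acting by swapping factors). -/
open Matrix Complex

noncomputable def σ : Fin 3 → Matrix (Fin 2) (Fin 2) ℂ
  | 0 => !![0, 1; 1, 0]
  | 1 => !![0, -I; I, 0]
  | 2 => !![1, 0; 0, -1]

noncomputable def ω (k : ℕ) : ℂ := Complex.exp (2 * Real.pi * I / k)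

noncomputable def V (k : ℕ) (a : Fin 3) : Matrix (Fin 2) (Fin 2) ℂ :=
  (1 / 2 : ℂ) • ((1 + ω k) • (1 : Matrix (Fin 2) (Fin 2) ℂ) + (1 - ω k) • σ a)

noncomputable def ρ (a b : Fin 3) : Matrix (Fin 2) (Fin 2) ℂ :=
  ((Real.sqrt 2 : ℂ))⁻¹ • (σ a + σ b)

/-- The subgroup of invertible 2×2 complex matrices generated by the units
whose underlying matrices lie in `S`. -/
noncomputable def G (S : Set (Matrix (Fin 2) (Fin 2) ℂ)) :
    Subgroup (Matrix (Fin 2) (Fin 2) ℂ)ˣ :=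
  Subgroup.closure {u : (Matrix (Fin 2) (Fin 2) ℂ)ˣ | (u : Matrix (Fin 2) (Fin 2) ℂ) ∈ S}

/-- Levi-Civita symbol (on `Fin 3`; differences agree with the 1,2,3 convention). -/
def ε (a b c : Fin 3) : ℤ :=
  ((a : ℤ) - (b : ℤ)) * ((b : ℤ) - (c : ℤ)) * ((c : ℤ) - (a : ℤ)) / 2

/-- The swap action of `Equiv.Perm (Fin 2)` on `Fin 2 → Multiplicative (ZMod k)`,
making `(C_k × C_k) ⋊ C₂ = C_k ≀ C₂`. -/
def swapAut (k : ℕ) : Equiv.Perm (Fin 2) →* MulAut (Fin 2 → Multiplicative (ZMod k)) :=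
  MonoidHom.mk'
    (fun e =>
      { Equiv.arrowCongr e (Equiv.refl (Multiplicative (ZMod k))) with
        map_mul' := fun _ _ => rfl })
    (fun _ _ => by ext f x; rfl)

/-!
`V k 2 = diag(1, ω)`, and `ρ 0 1` is an antidiagonal involution, so conjugation by it swaps the
entries of a diagonal matrix. Hence `(f, σ) ↦ diag(ω ^ f) · ρ ^ σ` is a homomorphism from
`C_k ≀ C₂ = (C_k × C_k) ⋊ S₂` to `GL₂(ℂ)`. It is injective: if `diag(ω ^ f) · ρ ^ σ = 1`, then
`ρ ^ σ` is diagonal, so it commutes with every diagonal matrix, which forces `σ = 1`; then `f = 0`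
because `ω` is a primitive `k`-th root of unity. Its image is `G {V k 2, ρ 0 1}`, because the
wreath product is generated by `((0, 1), 1)` and the swap, which are sent to `V k 2` and `ρ 0 1`.
-/

open SemidirectProduct

theorem Equiv.Perm.eq_one_of_forall_comp_eq {R n : Type*} [Semiring R] [Nontrivial R]
    [DecidableEq n] {σ : Equiv.Perm n} (h : ∀ d : n → R, d ∘ σ = d) : σ = 1 := by
  ext i
  by_contra hne
  have := congrFun (h (Pi.single (σ i) 1)) i
  simp only [Function.comp_apply, Pi.single_eq_same, Pi.single_apply] at this
  split_ifs at this with hi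
  · exact hne hi.symm
  · exact one_ne_zero this

section Monomial

variable {R : Type*} [CommSemiring R] {n : Type*} [Fintype n] [DecidableEq n] {k : ℕ} [NeZero k]
  {ζ : R}

noncomputable def diagonalUnitsHom (hζ : ζ ^ k = 1) :
    (n → Multiplicative (ZMod k)) →* (Matrix n n R)ˣ :=
  ((diagonalRingHom n R : (n → R) →* Matrix n n R).comp
    ((AddChar.zmodChar k hζ).toMonoidHom.compLeft n)).toHomUnits

theorem coe_diagonalUnitsHom (hζ : ζ ^ k = 1) (f : n → Multiplicative (ZMod k)) :
    (diagonalUnitsHom hζ f : Matrix n n R) = diagonal fun i => ζ ^ (f i).toAdd.val :=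
  rfl

theorem diagonalUnitsHom_injective (hζ : IsPrimitiveRoot ζ k) :
    Function.Injective (diagonalUnitsHom (n := n) hζ.pow_eq_one) := by
  intro f g hfg
  funext i
  have hi := congrFun (diagonal_injective (congrArg Units.val hfg)) i
  exact ZMod.val_injective k (hζ.pow_inj (ZMod.val_lt _) (ZMod.val_lt _) hi)

variable (π : Equiv.Perm n →* (Matrix n n R)ˣ)

def PermutesDiagonal : Prop :=
  ∀ σ (d : n → R), (π σ : Matrix n n R) * diagonal d = diagonal (d ∘ σ.symm) * π σ

theorem diagonalUnitsHom_comp_mulAutArrow (hζ : ζ ^ k = 1) (hπ : PermutesDiagonal π)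
    (σ : Equiv.Perm n) :
    (diagonalUnitsHom hζ).comp (mulAutArrow σ).toMonoidHom =
      (MulAut.conj (π σ)).toMonoidHom.comp (diagonalUnitsHom hζ) := by
  ext f : 1
  refine Units.ext ?_
  simp only [MonoidHom.comp_apply, MulEquiv.coe_toMonoidHom, MulAut.conj_apply, Units.val_mul,
    coe_diagonalUnitsHom, mulAutArrow_apply_apply]
  rw [hπ, mul_assoc, Units.mul_inv, mul_one]
  rfl

noncomputable def monomialHom (hζ : ζ ^ k = 1) (hπ : PermutesDiagonal π) :
    (n → Multiplicative (ZMod k)) ⋊[mulAutArrow] Equiv.Perm n →* (Matrix n n R)ˣ :=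
  lift (diagonalUnitsHom hζ) π (diagonalUnitsHom_comp_mulAutArrow π hζ hπ)

theorem monomialHom_apply (hζ : ζ ^ k = 1) (hπ : PermutesDiagonal π)
    (p : (n → Multiplicative (ZMod k)) ⋊[mulAutArrow] Equiv.Perm n) :
    monomialHom π hζ hπ p = diagonalUnitsHom hζ p.left * π p.right := by
  conv_lhs => rw [← inl_left_mul_inr_right p]
  rw [map_mul, monomialHom, lift_inl, lift_inr]

theorem monomialHom_injective [Nontrivial R] (hζ : IsPrimitiveRoot ζ k)
    (hπ : PermutesDiagonal π) : Function.Injective (monomialHom π hζ.pow_eq_one hπ) := by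
  rw [injective_iff_map_eq_one]
  rintro ⟨f, σ⟩ hfσ
  rw [monomialHom_apply] at hfσ
  set D : Matrix n n R := ↑(diagonalUnitsHom hζ.pow_eq_one f) with hD
  have hDP : D * π σ = 1 := congrArg Units.val hfσ
  have hσ : σ = 1 := by
    refine inv_eq_one.mp (Equiv.Perm.eq_one_of_forall_comp_eq (R := R) fun d => ?_)
    refine (diagonal_injective ?_).symm
    calc diagonal d = D * π σ * diagonal d := by rw [hDP, one_mul]
      _ = diagonal (d ∘ σ.symm) * (D * π σ) := by
          rw [mul_assoc, hπ, ← mul_assoc, ← mul_assoc, hD, coe_diagonalUnitsHom,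
            (commute_diagonal _ _).eq]
      _ = diagonal (d ∘ ⇑σ⁻¹) := by rw [hDP, mul_one]; rfl
  subst hσ
  rw [map_one, mul_one, (diagonalUnitsHom_injective hζ).eq_iff' (map_one _)] at hfσ
  exact SemidirectProduct.ext hfσ rfl

end Monomial

theorem Equiv.Perm.eq_one_or_eq_swap (σ : Equiv.Perm (Fin 2)) :
    σ = 1 ∨ σ = Equiv.swap 0 1 := by
  revert σ; decide

theorem closure_inl_mulSingle_inr_swap_eq_top {A : Type*} [Group A] {a : A}
    (ha : Subgroup.closure {a} = ⊤) :
    Subgroup.closure {inl (Pi.mulSingle (1 : Fin 2) a), inr (Equiv.swap 0 1)} =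
      (⊤ : Subgroup ((Fin 2 → A) ⋊[mulAutArrow] Equiv.Perm (Fin 2))) := by
  set H : Subgroup ((Fin 2 → A) ⋊[mulAutArrow] Equiv.Perm (Fin 2)) :=
    Subgroup.closure {inl (Pi.mulSingle (1 : Fin 2) a), inr (Equiv.swap 0 1)}
  have hswap : inr (Equiv.swap 0 1) ∈ H := Subgroup.subset_closure (by simp)
  have hinr : ∀ σ, inr σ ∈ H := by
    intro σ
    rcases σ.eq_one_or_eq_swap with rfl | rfl
    · rw [map_one]; exact H.one_mem
    · exact hswap
  have hinl₁ : ∀ x : A, inl (Pi.mulSingle (1 : Fin 2) x) ∈ H := by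
    have : Subgroup.closure {a} ≤ H.comap (inl.comp (MonoidHom.mulSingle _ 1)) :=
      (Subgroup.closure_le _).mpr (by simpa using Subgroup.subset_closure (by simp))
    exact fun x => this (ha ▸ Subgroup.mem_top x)
  have hinl₀ : ∀ x : A, inl (Pi.mulSingle (0 : Fin 2) x) ∈ H := by
    intro x
    have : mulAutArrow (Equiv.swap (0 : Fin 2) 1) (Pi.mulSingle 1 x : Fin 2 → A) =
        Pi.mulSingle 0 x := by
      ext i
      change (Pi.mulSingle 1 x : Fin 2 → A) ((Equiv.swap 0 1)⁻¹ i) = _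
      fin_cases i <;> simp
    rw [← this, inl_aut]
    exact mul_mem (mul_mem hswap (hinl₁ x)) (hinr _)
  refine (Subgroup.eq_top_iff' _).mpr fun p => ?_
  have hleft : p.left = Pi.mulSingle 0 (p.left 0) * Pi.mulSingle 1 (p.left 1) := by
    ext i; fin_cases i <;> simp
  rw [← inl_left_mul_inr_right p, hleft, map_mul]
  exact mul_mem (mul_mem (hinl₀ _) (hinl₁ _)) (hinr _)

theorem ZMod.closure_ofAdd_one (k : ℕ) :
    Subgroup.closure {Multiplicative.ofAdd (1 : ZMod k)} = ⊤ := by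
  refine (Subgroup.eq_top_iff' _).mpr fun x =>
    Subgroup.mem_closure_singleton.mpr ⟨x.toAdd.cast, ?_⟩
  rw [← ofAdd_zsmul, zsmul_one, ZMod.intCast_zmod_cast]
  rfl

def permFinTwoHom {M : Type*} [Monoid M] (r : M) (hr : r * r = 1) : Equiv.Perm (Fin 2) →* M where
  toFun σ := if σ = 1 then 1 else r
  map_one' := if_pos rfl
  map_mul' σ τ := by
    rcases σ.eq_one_or_eq_swap with rfl | rfl <;> rcases τ.eq_one_or_eq_swap with rfl | rfl <;>
      simp [hr, Equiv.swap_mul_self]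

theorem permFinTwoHom_swap {M : Type*} [Monoid M] (r : M) (hr : r * r = 1) :
    permFinTwoHom r hr (Equiv.swap 0 1) = r := by
  simp [permFinTwoHom]

theorem ρ_mul_self : ρ 0 1 * ρ 0 1 = 1 := by
  have h2 : ((Real.sqrt 2 : ℝ) : ℂ) * ((Real.sqrt 2 : ℝ) : ℂ) = 2 := by
    norm_cast; exact Real.mul_self_sqrt zero_le_two
  have hne : ((Real.sqrt 2 : ℝ) : ℂ) ≠ 0 := by norm_cast; positivity
  ext i j
  fin_cases i <;> fin_cases j <;>
    simp [ρ, σ, Matrix.mul_apply, Fin.sum_univ_two] <;>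
    field_simp <;> linear_combination (-1 : ℂ) * Complex.I_sq - h2

theorem ρ_mul_diagonal (d : Fin 2 → ℂ) :
    ρ 0 1 * diagonal d = diagonal (d ∘ Equiv.swap 0 1) * ρ 0 1 := by
  ext i j
  rw [mul_diagonal, diagonal_mul]
  fin_cases i <;> fin_cases j <;> simp [ρ, σ] <;> ring

theorem V_two_eq_diagonal (k : ℕ) : V k 2 = diagonal ![1, ω k] := by
  ext i j
  fin_cases i <;> fin_cases j <;> simp [V, σ] <;> ring

theorem isPrimitiveRoot_ω (k : ℕ) [NeZero k] : IsPrimitiveRoot (ω k) k :=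
  Complex.isPrimitiveRoot_exp k (NeZero.ne k)

theorem swapAut_eq_mulAutArrow (k : ℕ) : swapAut k = mulAutArrow := by
  ext σ f i
  rfl

noncomputable def pauliPermHom : Equiv.Perm (Fin 2) →* (Matrix (Fin 2) (Fin 2) ℂ)ˣ :=
  (permFinTwoHom (ρ 0 1) ρ_mul_self).toHomUnits

theorem coe_pauliPermHom_swap : (pauliPermHom (Equiv.swap 0 1) : Matrix _ _ ℂ) = ρ 0 1 :=
  permFinTwoHom_swap _ _

theorem permutesDiagonal_pauliPermHom : PermutesDiagonal pauliPermHom := by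
  intro σ d
  rcases σ.eq_one_or_eq_swap with rfl | rfl
  · rw [map_one, Units.val_one, one_mul, mul_one]
    rfl
  · rw [coe_pauliPermHom_swap, Equiv.symm_swap]
    exact ρ_mul_diagonal d

section PauliRoot

variable (k : ℕ) [NeZero k]

noncomputable def pauliRootHom :
    (Fin 2 → Multiplicative (ZMod k)) ⋊[mulAutArrow] Equiv.Perm (Fin 2) →*
      (Matrix (Fin 2) (Fin 2) ℂ)ˣ :=
  monomialHom pauliPermHom (isPrimitiveRoot_ω k).pow_eq_one permutesDiagonal_pauliPermHom

theorem pauliRootHom_injective : Function.Injective (pauliRootHom k) :=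
  monomialHom_injective _ (isPrimitiveRoot_ω k) permutesDiagonal_pauliPermHom

theorem coe_pauliRootHom_inl :
    (pauliRootHom k (inl (Pi.mulSingle 1 (Multiplicative.ofAdd 1))) : Matrix _ _ ℂ) = V k 2 := by
  have hω : ω k ^ (1 : ZMod k).val = ω k := by
    rw [ZMod.val_one_eq_one_mod, ← pow_eq_pow_mod 1 (isPrimitiveRoot_ω k).pow_eq_one, pow_one]
  rw [pauliRootHom, monomialHom, lift_inl, coe_diagonalUnitsHom, V_two_eq_diagonal]
  congr 1
  funext i
  fin_cases i <;> simp [hω]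

theorem coe_pauliRootHom_inr :
    (pauliRootHom k (inr (Equiv.swap 0 1)) : Matrix _ _ ℂ) = ρ 0 1 := by
  rw [pauliRootHom, monomialHom, lift_inr, coe_pauliPermHom_swap]

theorem range_pauliRootHom : (pauliRootHom k).range = G {V k 2, ρ 0 1} := by
  rw [MonoidHom.range_eq_map, ← closure_inl_mulSingle_inr_swap_eq_top
    (ZMod.closure_ofAdd_one k), MonoidHom.map_closure, G]
  congr 1
  change _ = Units.val ⁻¹' {V k 2, ρ 0 1}
  rw [← coe_pauliRootHom_inl k, ← coe_pauliRootHom_inr k, ← Set.image_pair,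
    Set.preimage_image_eq _ Units.val_injective, Set.image_pair]

end PauliRoot

theorem stmt12 (k : ℕ) (hk : 1 ≤ k) :
    Nat.card (G {V k 2, ρ 0 1}) = 2 * k ^ 2 ∧
    Nonempty ((G {V k 2, ρ 0 1}) ≃*
      SemidirectProduct (Fin 2 → Multiplicative (ZMod k)) (Equiv.Perm (Fin 2)) (swapAut k)) := by
  have : NeZero k := NeZero.of_pos hk
  let e : G {V k 2, ρ 0 1} ≃*
      (Fin 2 → Multiplicative (ZMod k)) ⋊[mulAutArrow] Equiv.Perm (Fin 2) :=
    (MulEquiv.subgroupCongr (range_pauliRootHom k).symm).trans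
      (MonoidHom.ofInjective (pauliRootHom_injective k)).symm
  rw [swapAut_eq_mulAutArrow]
  refine ⟨?_, ⟨e⟩⟩
  rw [Nat.card_congr e.toEquiv, SemidirectProduct.card, Nat.card_fun, Nat.card_perm]
  simp only [Nat.card_eq_fintype_card, Fintype.card_multiplicative, ZMod.card, Fintype.card_fin,
    Nat.factorial_two]
  ring
end

section
/- For a ≠ b, the smooth Pauli root group ⟨σ_a, ρ_{ab}⟩ (degree k = 2) is isomorphic to the dihedral group D_8 with 16 elements; in particular, the product σ_a·ρ_{ab} has order 8. -/
open Matrix Complex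

/-! ### Auxiliary lemmas -/

/-- Dihedral presentation recognition: a subgroup generated by two involutions whose
product has order 8, with the extra condition ruling out collapse, is `D₈`. -/
lemma dihedral_of_gens {Gr : Type*} [Group Gr] (x y : Gr) (hx : x * x = 1) (hy : y * y = 1)
    (hord : orderOf (x * y) = 8) (hs : ∀ k : ℕ, x * (x * y) ^ k ≠ 1) :
    Nonempty ((Subgroup.closure {x, y} : Subgroup Gr) ≃* DihedralGroup 8) := by
  set r := x * y with hr
  have hxi : x⁻¹ = x := inv_eq_of_mul_eq_one_right hx
  have hyi : y⁻¹ = y := inv_eq_of_mul_eq_one_right hy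
  have hconj1 : x * r * x⁻¹ = r⁻¹ := by
    rw [hxi, hr, show x * (x * y) = (x * x) * y from (mul_assoc _ _ _).symm, hx, one_mul,
      _root_.mul_inv_rev, hxi, hyi]
  have hconj : ∀ k : ℕ, x * r ^ k * x⁻¹ = (r ^ k)⁻¹ := by
    intro k
    have h1 : (MulAut.conj x) (r ^ k) = ((MulAut.conj x) r) ^ k := map_pow _ _ _
    simpa [MulAut.conj_apply, hconj1, inv_pow] using h1
  have hrx : ∀ k : ℕ, r ^ k * x = x * (r ^ k)⁻¹ := by
    intro k
    have h2 := hconj k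
    rw [hxi] at h2
    calc r ^ k * x = x * (x * r ^ k * x) := by rw [← mul_assoc, ← mul_assoc, hx, one_mul]
    _ = x * (r ^ k)⁻¹ := by rw [h2]
  have hpow : ∀ i j : ZMod 8, r ^ (i + j).val = r ^ i.val * r ^ j.val := by
    intro i j
    have h3 := pow_mod_orderOf r (i.val + j.val)
    rw [hord] at h3
    rw [ZMod.val_add, h3, pow_add]
  have hneg : ∀ i : ZMod 8, r ^ (-i).val = (r ^ i.val)⁻¹ := by
    intro i
    have h0 : r ^ (i + -i).val = r ^ i.val * r ^ (-i).val := hpow i (-i)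
    rw [add_neg_cancel] at h0
    have hz : ((0 : ZMod 8)).val = 0 := rfl
    rw [hz, pow_zero] at h0
    exact (inv_eq_of_mul_eq_one_right h0.symm).symm
  have hcomm : ∀ m n : ℕ, (r ^ m)⁻¹ * r ^ n = r ^ n * (r ^ m)⁻¹ := fun m n =>
    ((Commute.refl r).pow_pow m n).inv_left.eq
  let f : DihedralGroup 8 → Gr := fun d =>
    match d with
    | DihedralGroup.r i => r ^ i.val
    | DihedralGroup.sr i => x * r ^ i.val
  have hf : ∀ d e : DihedralGroup 8, f (d * e) = f d * f e := by
    rintro (i | i) (j | j)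
    · show r ^ (i + j).val = r ^ i.val * r ^ j.val
      exact hpow i j
    · show x * r ^ (j - i).val = r ^ i.val * (x * r ^ j.val)
      rw [← mul_assoc, hrx, sub_eq_add_neg, add_comm, hpow, hneg, mul_assoc, hcomm, ← mul_assoc]
    · show x * r ^ (i + j).val = (x * r ^ i.val) * r ^ j.val
      rw [hpow, mul_assoc]
    · show r ^ (j - i).val = (x * r ^ i.val) * (x * r ^ j.val)
      rw [sub_eq_add_neg, add_comm, hpow, hneg, mul_assoc, ← mul_assoc (r ^ i.val), hrx,
        ← mul_assoc, ← mul_assoc, hx, one_mul, hcomm]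
  let φ : DihedralGroup 8 →* Gr := MonoidHom.mk' f hf
  have hinj : Function.Injective φ := by
    rw [injective_iff_map_eq_one]
    rintro (i | i) h
    · have h' : r ^ i.val = 1 := h
      have hdvd := orderOf_dvd_of_pow_eq_one h'
      rw [hord] at hdvd
      have hlt := ZMod.val_lt i
      have hv : i.val = 0 := by omega
      rw [DihedralGroup.one_def]
      congr 1
      exact (ZMod.val_eq_zero i).mp hv
    · exact absurd h (hs i.val)
  have hxmem : x ∈ Subgroup.closure ({x, y} : Set Gr) :=
    Subgroup.subset_closure (by simp)
  have hymem : y ∈ Subgroup.closure ({x, y} : Set Gr) :=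
    Subgroup.subset_closure (by simp)
  have hrange : φ.range = Subgroup.closure ({x, y} : Set Gr) := by
    apply le_antisymm
    · rintro _ ⟨(i | i), rfl⟩
      · exact pow_mem (mul_mem hxmem hymem) _
      · exact mul_mem hxmem (pow_mem (mul_mem hxmem hymem) _)
    · rw [Subgroup.closure_le]
      rintro z (hz | hz)
      · refine ⟨DihedralGroup.sr 0, ?_⟩
        show x * r ^ (0 : ZMod 8).val = z
        simp [hz]
      · refine ⟨DihedralGroup.sr 1, ?_⟩
        show x * r ^ (1 : ZMod 8).val = z
        have h1 : ((1 : ZMod 8)).val = 1 := rfl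
        rw [h1, pow_one, hr, ← mul_assoc, hx, one_mul, hz]
  exact ⟨(MulEquiv.subgroupCongr hrange.symm).trans (MonoidHom.ofInjective hinj).symm⟩

lemma sigma_sq (a : Fin 3) : σ a * σ a = 1 := by
  fin_cases a <;>
    simp [σ, Matrix.mul_fin_two, Matrix.one_fin_two] <;>
    norm_num [funext_iff, Fin.forall_fin_two, Complex.ext_iff]

lemma sigma_mul_sq {a b : Fin 3} (h : a ≠ b) : (σ a * σ b) * (σ a * σ b) = -1 := by
  fin_cases a <;> fin_cases b <;> simp_all <;>
    simp [σ, Matrix.mul_fin_two, Matrix.one_fin_two] <;>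
    norm_num [funext_iff, Fin.forall_fin_two, Complex.ext_iff]

lemma sum_sq {a b : Fin 3} (h : a ≠ b) : (σ a + σ b) * (σ a + σ b) = (2:ℂ) • 1 := by
  fin_cases a <;> fin_cases b <;> simp_all <;>
    simp [σ, Matrix.mul_fin_two, Matrix.one_fin_two] <;>
    norm_num [funext_iff, Fin.forall_fin_two, Complex.ext_iff]

lemma det_sigma (a : Fin 3) : (σ a).det = -1 := by
  fin_cases a <;> simp [σ, Matrix.det_fin_two_of] <;>
    norm_num [Complex.ext_iff]

lemma det_sum {a b : Fin 3} (h : a ≠ b) : (σ a + σ b).det = -2 := by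
  fin_cases a <;> fin_cases b <;> simp_all <;>
    simp [σ, Matrix.det_fin_two] <;> norm_num [Complex.ext_iff]

lemma sqrtC_sq : ((Real.sqrt 2 : ℂ)) ^ 2 = 2 := by
  norm_cast
  rw [Real.sq_sqrt]
  norm_num

lemma c_mul_c : ((Real.sqrt 2 : ℂ))⁻¹ * ((Real.sqrt 2 : ℂ))⁻¹ * 2 = 1 := by
  rw [← mul_inv, ← sq, sqrtC_sq]
  norm_num

lemma rho_sq {a b : Fin 3} (h : a ≠ b) : ρ a b * ρ a b = 1 := by
  rw [ρ, Matrix.smul_mul, Matrix.mul_smul, smul_smul, sum_sq h, smul_smul, c_mul_c, one_smul]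

lemma srho_sq {a b : Fin 3} (h : a ≠ b) :
    (σ a * ρ a b) * (σ a * ρ a b) = σ a * σ b := by
  have hA : σ a * ρ a b = ((Real.sqrt 2 : ℂ))⁻¹ • (1 + σ a * σ b) := by
    rw [ρ, Matrix.mul_smul, mul_add, sigma_sq]
  have hexp : (1 + σ a * σ b) * (1 + σ a * σ b) = (2:ℂ) • (σ a * σ b) := by
    have hh : (1 + σ a * σ b) * (1 + σ a * σ b)
        = 1 + σ a * σ b + σ a * σ b + (σ a * σ b) * (σ a * σ b) := by noncomm_ring
    rw [hh, sigma_mul_sq h, two_smul]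
    abel
  rw [hA, Matrix.smul_mul, Matrix.mul_smul, smul_smul, hexp, smul_smul, c_mul_c, one_smul]

lemma det_rho {a b : Fin 3} (h : a ≠ b) : (ρ a b).det = -1 := by
  rw [ρ, Matrix.det_smul, det_sum h, Fintype.card_fin, inv_pow, sqrtC_sq]
  norm_num

lemma neg_one_ne_one_mat : (-1 : Matrix (Fin 2) (Fin 2) ℂ) ≠ 1 := by
  intro h
  have h00 := congrFun (congrFun h 0) 0
  simp [Matrix.one_apply, Matrix.neg_apply] at h00
  exact absurd h00 (by norm_num)

lemma srho_pow_four {a b : Fin 3} (h : a ≠ b) : (σ a * ρ a b) ^ 4 = -1 := by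
  have h2 : (σ a * ρ a b) ^ 2 = σ a * σ b := by rw [sq]; exact srho_sq h
  rw [show (4:ℕ) = 2 * 2 from rfl, pow_mul, h2, sq]
  exact sigma_mul_sq h

lemma srho_order {a b : Fin 3} (h : a ≠ b) : orderOf (σ a * ρ a b) = 8 := by
  have h4 := srho_pow_four h
  have h8 : (σ a * ρ a b) ^ 8 = 1 := by
    rw [show (8:ℕ) = 4 * 2 from rfl, pow_mul, h4]
    norm_num
  have := orderOf_eq_prime_pow (x := σ a * ρ a b) (p := 2) (n := 2)
    (by rw [show (2:ℕ)^2 = 4 from rfl, h4]; exact neg_one_ne_one_mat)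
    (by rw [show (2:ℕ)^(2+1) = 8 from rfl]; exact h8)
  simpa using this

theorem stmt15 (a b : Fin 3) (hab : a ≠ b) :
    Nonempty ((G {σ a, ρ a b}) ≃* DihedralGroup 8) ∧ orderOf (σ a * ρ a b) = 8 := by
  refine ⟨?_, srho_order hab⟩
  set M := Matrix (Fin 2) (Fin 2) ℂ
  let X : Mˣ := ⟨σ a, σ a, sigma_sq a, sigma_sq a⟩
  let Y : Mˣ := ⟨ρ a b, ρ a b, rho_sq hab, rho_sq hab⟩
  have hX2 : X * X = 1 := Units.ext (sigma_sq a)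
  have hY2 : Y * Y = 1 := Units.ext (rho_sq hab)
  have hXYval : ((X * Y : Mˣ) : M) = σ a * ρ a b := rfl
  have hordU : orderOf (X * Y) = 8 := by
    rw [← orderOf_units, hXYval]
    exact srho_order hab
  have hdetXY : ((X * Y : Mˣ) : M).det = 1 := by
    rw [hXYval, Matrix.det_mul, det_sigma, det_rho hab]
    norm_num
  have hs : ∀ k : ℕ, X * (X * Y) ^ k ≠ 1 := by
    intro k h
    have hval : ((X * (X * Y) ^ k : Mˣ) : M) = (1 : M) := by rw [h]; rfl
    have hdet := congrArg Matrix.det hval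
    rw [Units.val_mul, Units.val_pow_eq_pow_val, Matrix.det_mul, Matrix.det_pow,
      hdetXY, det_sigma, Matrix.det_one] at hdet
    norm_num at hdet
  have hset : {u : Mˣ | (u : M) ∈ ({σ a, ρ a b} : Set M)} = {X, Y} := by
    ext u
    constructor
    · rintro (hu | hu)
      · exact Or.inl (Units.ext hu)
      · exact Or.inr (Units.ext hu)
    · rintro (rfl | rfl)
      · exact Or.inl rfl
      · exact Or.inr rfl
  have hG : G {σ a, ρ a b} = Subgroup.closure ({X, Y} : Set Mˣ) := by
    rw [G, hset]
  obtain ⟨e⟩ := dihedral_of_gens X Y hX2 hY2 hordU hs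
  exact ⟨(MulEquiv.subgroupCongr hG).trans e⟩
end
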